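/- arXiv:1801.01992 — 8 statements merged into one kernel-verified Lean document; each statement's English description precedes it below -/
import Mathlib

section
/- Let (E,τ) be a real locally convex space. If every subset of E that is countably compact in the weak topology σ(E,E') is countably compact in the original topology τ, then E has the Schur property. -/
/-!
It suffices that `a` is a `τ`-cluster point of every subsequence `v` of a weakly convergent
sequence `u → a`. The set `{a} ∪ range v` is weakly compact, hence by hypothesis `τ`-countably
compact, so `v` has a `τ`-cluster point `b`. Then `b` is also a weak cluster point of `v`, so no
continuous functional separates `b` from `a`; by Hahn–Banach, `b` and `a` are then
`τ`-inseparable, and `a` is a `τ`-cluster point of `v` as well.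
-/

open Filter Topology Bornology

/-- The weak topology σ(E,E') on a (locally convex) topological vector space `E`:
the initial topology with respect to all continuous linear functionals on `E`. -/
def weakTop (E : Type*) [AddCommGroup E] [Module ℝ E] [TopologicalSpace E] :
    TopologicalSpace E :=
  TopologicalSpace.induced (fun x (f : E →L[ℝ] ℝ) => f x) Pi.topologicalSpace

/-- A set `A` is functionally bounded for the topology `t` if every `t`-continuous
real-valued function is bounded on `A`. -/
def FunBounded {E : Type*} (t : TopologicalSpace E) (A : Set E) : Prop :=
  ∀ f : E → ℝ, @Continuous E ℝ t _ f → ∃ C : ℝ, ∀ x ∈ A, |f x| ≤ C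

/-- The Schur property: every sequence converging in the weak topology σ(E,E') to a point
converges to that point in the original topology. -/
def HasSchur (E : Type*) [AddCommGroup E] [Module ℝ E] [TopologicalSpace E] : Prop :=
  ∀ (u : ℕ → E) (a : E),
    Filter.Tendsto u Filter.atTop (@nhds E (weakTop E) a) →
    Filter.Tendsto u Filter.atTop (nhds a)

/-- A set `A` is countably compact for the topology `t` if every sequence in `A` has a
cluster point belonging to `A`. -/
def CountablyCompactIn {E : Type*} (t : TopologicalSpace E) (A : Set E) : Prop :=
  ∀ u : ℕ → E, (∀ n, u n ∈ A) → ∃ a ∈ A, @MapClusterPt E t ℕ a Filter.atTop u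

lemma IsCompact.countablyCompactIn {X : Type*} [t : TopologicalSpace X] {s : Set X}
    (hs : IsCompact s) : CountablyCompactIn t s := fun _ hu =>
  hs (tendsto_principal.mpr (Eventually.of_forall hu))

lemma MapClusterPt.of_le_topology {X α : Type*} {t₁ t₂ : TopologicalSpace X} (hle : t₁ ≤ t₂)
    {l : Filter α} {u : α → X} {x : X} (h : @MapClusterPt X t₁ α x l u) :
    @MapClusterPt X t₂ α x l u :=
  NeBot.mono h (inf_le_inf_right _ (nhds_mono hle))

lemma MapClusterPt.inseparable_of_tendsto {X α : Type*} [TopologicalSpace X] [R1Space X]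
    {l : Filter α} {u : α → X} {a b : X} (hb : MapClusterPt b l u) (hu : Tendsto u l (𝓝 a)) :
    Inseparable b a :=
  .of_nhds_neBot (NeBot.mono hb (inf_le_inf_left _ hu))

lemma tendsto_of_forall_subseq_mapClusterPt {X : Type*} [TopologicalSpace X] {u : ℕ → X} {a : X}
    (h : ∀ φ : ℕ → ℕ, StrictMono φ → MapClusterPt a atTop (u ∘ φ)) :
    Tendsto u atTop (𝓝 a) := by
  intro U hU
  by_contra hnot
  obtain ⟨φ, hφ, hφU⟩ := extraction_of_frequently_atTop (not_eventually.mp hnot)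
  obtain ⟨n, hn⟩ := ((h φ hφ).frequently hU).exists
  exact hφU n hn

section WeakTopology

variable {E : Type*} [AddCommGroup E] [Module ℝ E] [TopologicalSpace E]

lemma le_weakTop : ‹TopologicalSpace E› ≤ weakTop E :=
  continuous_iff_le_induced.mp (continuous_pi fun f : E →L[ℝ] ℝ => f.continuous)

lemma r1Space_weakTop : @R1Space E (weakTop E) := .induced _

lemma inseparable_weakTop_iff {x y : E} :
    @Inseparable E (weakTop E) x y ↔ ∀ f : E →L[ℝ] ℝ, f x = f y :=
  (@IsInducing.inseparable_iff E _ (weakTop E) _ x y _ (.induced _)).symm.trans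
    (inseparable_iff_eq.trans funext_iff)

variable [IsTopologicalAddGroup E] [ContinuousSMul ℝ E] [LocallyConvexSpace ℝ E]

lemma inseparable_of_forall_strongDual_eq {x y : E} (h : ∀ f : E →L[ℝ] ℝ, f x = f y) :
    Inseparable x y := by
  rw [addGroup_inseparable_iff]
  by_contra hxy
  obtain ⟨f, c, hfc, hc⟩ := geometric_hahn_banach_point_closed
    (convex_singleton (0 : E)).closure isClosed_closure hxy
  have h0 := hc 0 (subset_closure rfl)
  rw [map_sub, h f, sub_self] at hfc
  rw [map_zero] at h0
  exact hfc.not_gt h0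

lemma MapClusterPt.inseparable_of_tendsto_weakTop {α : Type*} {l : Filter α} {u : α → E}
    {a b : E} (hb : MapClusterPt b l u) (hu : Tendsto u l (@nhds E (weakTop E) a)) :
    Inseparable b a :=
  inseparable_of_forall_strongDual_eq <| inseparable_weakTop_iff.mp <|
    @MapClusterPt.inseparable_of_tendsto E α (weakTop E) r1Space_weakTop l u a b
      (hb.of_le_topology le_weakTop) hu

end WeakTopology

/-- If a real locally convex space weakly respects countable compactness,
then it has the Schur property. -/
theorem schur_of_weakly_respects_countable_compactness
    (E : Type*) [AddCommGroup E] [Module ℝ E] [τ : TopologicalSpace E]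
    [IsTopologicalAddGroup E] [ContinuousSMul ℝ E] [LocallyConvexSpace ℝ E]
    (h : ∀ A : Set E, CountablyCompactIn (weakTop E) A → CountablyCompactIn τ A) :
    HasSchur E := by
  intro u a hu
  refine tendsto_of_forall_subseq_mapClusterPt fun φ hφ => ?_
  have hv : Tendsto (u ∘ φ) atTop (@nhds E (weakTop E) a) := hu.comp hφ.tendsto_atTop
  have hA : CountablyCompactIn (weakTop E) (insert a (Set.range (u ∘ φ))) :=
    IsCompact.countablyCompactIn (t := weakTop E)
      (@Tendsto.isCompact_insert_range E (weakTop E) _ _ hv)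
  obtain ⟨b, -, hb⟩ := h _ hA (u ∘ φ) fun n => Set.mem_insert_of_mem a ⟨n, rfl⟩
  exact (hb.inseparable_of_tendsto_weakTop hv).specializes.clusterPt hb
end

section
/- Let (E,τ) be a real locally convex space such that every countable functionally bounded subset of E has compact closure in E (i.e. E is a countably μ-space). If every subset of E that is functionally bounded in the weak topology σ(E,E') is functionally bounded in the original topology τ, then E has the Schur property. -/
open Filter Topology Bornology

/-! If `u → a` weakly, then `{a} ∪ range u` is weakly compact, hence weakly functionally bounded,
hence functionally bounded, so its closure `K` is compact. Every cluster point `b` of `u` in `K`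
is identified with `a` by every continuous functional, so by Hahn–Banach `b ⤳ a` (`E` need not
be Hausdorff); a sequence in a compact set all of whose cluster points specialize to `a`
converges to `a`. -/

section WeakTopology

variable {E : Type*} [AddCommGroup E] [Module ℝ E] [TopologicalSpace E]

theorem continuous_weakTop_clm (f : E →L[ℝ] ℝ) : Continuous[weakTop E, _] f :=
  @Continuous.comp _ _ _ (weakTop E) _ _ (fun x (g : E →L[ℝ] ℝ) => g x) _ (continuous_apply f)
    continuous_induced_dom

theorem clm_eq_of_tendsto_weakTop_of_mapClusterPt {ι : Type*} {l : Filter ι} {u : ι → E}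
    {a b : E} (hu : Tendsto u l (@nhds E (weakTop E) a)) (hb : MapClusterPt b l u)
    (f : E →L[ℝ] ℝ) : f b = f a := by
  have hfu : Tendsto (f ∘ u) l (𝓝 (f a)) :=
    (@Continuous.tendsto E ℝ (weakTop E) _ f (continuous_weakTop_clm f) a).comp hu
  have hfb : MapClusterPt (f b) l (f ∘ u) := hb.tendsto_comp (f.continuous.tendsto b)
  exact eq_of_nhds_neBot (hfb.neBot.mono (inf_le_inf_left _ hfu))

end WeakTopology

theorem IsCompact.funBounded {X : Type*} [TopologicalSpace X] {K : Set X} (hK : IsCompact K) :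
    FunBounded ‹_› K := fun f hf => by
  simpa only [Real.norm_eq_abs] using hK.exists_bound_of_continuousOn hf.continuousOn

theorem specializes_of_forall_clm_eq {E : Type*} [AddCommGroup E] [Module ℝ E]
    [TopologicalSpace E] [IsTopologicalAddGroup E] [ContinuousSMul ℝ E]
    [LocallyConvexSpace ℝ E] {a b : E} (h : ∀ f : E →L[ℝ] ℝ, f b = f a) : b ⤳ a := by
  rw [specializes_iff_mem_closure]
  by_contra ha
  obtain ⟨f, c, hfa, hfb⟩ :=
    geometric_hahn_banach_point_closed (convex_singleton b).closure isClosed_closure ha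
  linarith [hfb b (subset_closure rfl), h f]

theorem IsCompact.tendsto_nhds_of_mapClusterPt_specializes {X ι : Type*} [TopologicalSpace X]
    {K : Set X} {l : Filter ι} {u : ι → X} {a : X} (hK : IsCompact K) (huK : ∀ᶠ i in l, u i ∈ K)
    (h : ∀ b ∈ K, MapClusterPt b l u → b ⤳ a) : Tendsto u l (𝓝 a) :=
  (hK.tendsto_nhdsSet_of_mapClusterPt huK h).mono_right (nhdsSet_le.2 fun _ hb => hb)

/-- Let `E` be a real locally convex space which is a countably μ-space
(every countable functionally bounded set has compact closure). If `E` weakly respects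
functional boundedness, then `E` has the Schur property. -/
theorem schur_of_weakly_respects_functional_boundedness
    (E : Type*) [AddCommGroup E] [Module ℝ E] [τ : TopologicalSpace E]
    [IsTopologicalAddGroup E] [ContinuousSMul ℝ E] [LocallyConvexSpace ℝ E]
    (hcμ : ∀ A : Set E, A.Countable → FunBounded τ A → IsCompact (closure A))
    (h : ∀ A : Set E, FunBounded (weakTop E) A → FunBounded τ A) :
    HasSchur E := by
  intro u a hu
  have hweak : @IsCompact E (weakTop E) (insert a (Set.range u)) :=
    @Tendsto.isCompact_insert_range E (weakTop E) u a hu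
  have hK : IsCompact (closure (insert a (Set.range u))) :=
    hcμ _ ((Set.countable_range u).insert a) (h _ (@IsCompact.funBounded E (weakTop E) _ hweak))
  refine hK.tendsto_nhds_of_mapClusterPt_specializes
    (.of_forall fun n => subset_closure (Set.mem_insert_of_mem a ⟨n, rfl⟩)) fun b _ hb => ?_
  exact specializes_of_forall_clm_eq (clm_eq_of_tendsto_weakTop_of_mapClusterPt hu hb)
end

section
/- Let E be a real locally convex space and let {a_n} be a sequence in E that is equivalent to the unit basis of ℓ¹, i.e. there exists a linear topological isomorphism R from the closure of the linear span of {a_n} onto a subspace of ℓ¹ with R(a_n) = e_n for every n. Then the set {a_n : n ∈ ℕ} is not functionally bounded in E endowed with the weak topology σ(E,E'). -/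
open Filter Topology Bornology

/-- A sequence `a` in `E` is equivalent to the unit basis of ℓ¹: there is a linear
topological isomorphism (an injective inducing linear map) from the closure of the span of
the sequence onto a subspace of ℓ¹ sending `a n` to the `n`-th unit basis vector. -/
def EquivL1Basis (E : Type*) [AddCommGroup E] [Module ℝ E] [TopologicalSpace E]
    [IsTopologicalAddGroup E] [ContinuousSMul ℝ E] (a : ℕ → E) : Prop :=
  ∃ R : ↥((Submodule.span ℝ (Set.range a)).topologicalClosure) →ₗ[ℝ] lp (fun _ : ℕ => ℝ) 1,
    IsInducing R ∧ Function.Injective R ∧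
      ∀ n : ℕ,
        R ⟨a n, Submodule.le_topologicalClosure _
            (Submodule.subset_span (Set.mem_range_self n))⟩ = lp.single 1 n 1

/-!
Let `p` be a continuous seminorm on `E` dominating `‖R ·‖` on the closed span `M` of the `aₙ`.
The tail functionals `y ↦ ∑_{j ≥ k} (R y) j` on `M` are dominated by `p`, so by Hahn–Banach they
extend to `fₖ ∈ E'` with `|fₖ| ≤ p` and `fₖ aₙ = [k ≤ n]`. Along a free ultrafilter the `fₖ`
converge pointwise to some `Λ ∈ E'` (Alaoglu–Bourbaki), and `Λ aₙ = 0`. The weakly continuous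
`gₖ = fₖ - Λ` satisfy `gₖ aₙ = 1` for `k ≤ n`, while at every `x` some `gₖ x < 1`. Hence
`F = ∑ₖ min 2⁻ᵏ (1 - gₖ)⁺` is weakly continuous and positive with `F aₙ ≤ 2⁻ⁿ`, and `1 / F` is
unbounded on `{aₙ}`.
-/

section FunctionallyBounded

variable {X : Type*} [TopologicalSpace X]

theorem not_funBounded_range_of_tendsto_zero {F : X → ℝ} (hF : Continuous F)
    (hpos : ∀ x, 0 < F x) {a : ℕ → X} (ha : Tendsto (F ∘ a) atTop (𝓝 0)) :
    ¬ FunBounded ‹_› (Set.range a) := by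
  intro hbdd
  obtain ⟨C, hC⟩ := hbdd (fun x => (F x)⁻¹) (hF.inv₀ fun x => (hpos x).ne')
  have hinv : Tendsto (F ∘ a)⁻¹ atTop atTop :=
    (tendsto_nhdsWithin_iff.2 ⟨ha, .of_forall fun n => hpos (a n)⟩).inv_tendsto_nhdsGT_zero
  obtain ⟨n, hn⟩ := (hinv.eventually_gt_atTop C).exists
  exact (hn.trans_le (le_abs_self _)).not_ge (hC _ ⟨n, rfl⟩)

theorem not_funBounded_range_of_exists_lt_one {g : ℕ → X → ℝ} (hcont : ∀ k, Continuous (g k))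
    (hlt : ∀ x, ∃ k, g k x < 1) {a : ℕ → X} (ha : ∀ k n, k ≤ n → 1 ≤ g k (a n)) :
    ¬ FunBounded ‹_› (Set.range a) := by
  set w : ℕ → ℝ := fun k => (1 / 2) ^ k
  have hw : Summable w := summable_geometric_two
  have hw0 : ∀ k, 0 < w k := fun k => by positivity
  set t : ℕ → X → ℝ := fun k x => min (w k) (max (1 - g k x) 0)
  have ht0 : ∀ k x, 0 ≤ t k x := fun k x => le_min (hw0 k).le (le_max_right _ _)
  have htw : ∀ k x, t k x ≤ w k := fun k x => min_le_left _ _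
  have ht : ∀ x, Summable (t · x) := fun x => hw.of_nonneg_of_le (ht0 · x) (htw · x)
  refine not_funBounded_range_of_tendsto_zero (F := fun x => ∑' k, t k x) ?_ (fun x => ?_) ?_
  · refine continuous_tsum
      (fun k => continuous_const.min ((continuous_const.sub (hcont k)).max continuous_const)) hw
      fun k x => ?_
    rw [Real.norm_of_nonneg (ht0 k x)]
    exact htw k x
  · obtain ⟨k, hk⟩ := hlt x
    exact (ht x).tsum_pos (ht0 · x) k (lt_min (hw0 k) (lt_max_of_lt_left (sub_pos.2 hk)))
  · refine squeeze_zero (fun n => tsum_nonneg (ht0 · (a n))) (fun n => ?_)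
      ((tendsto_sum_nat_add w).comp (tendsto_add_atTop_nat 1))
    have hhead : ∑ k ∈ Finset.range (n + 1), t k (a n) = 0 :=
      Finset.sum_eq_zero fun k hk => by
        show min (w k) (max (1 - g k (a n)) 0) = 0
        rw [max_eq_right (sub_nonpos.2 (ha k n (Finset.mem_range_succ_iff.1 hk))),
          min_eq_right (hw0 k).le]
    rw [Function.comp_apply, ← (ht (a n)).sum_add_tsum_nat_add (n + 1), hhead, zero_add]
    exact ((summable_nat_add_iff _).2 (ht (a n))).tsum_le_tsum (fun k => htw _ _)
      ((summable_nat_add_iff _).2 hw)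

end FunctionallyBounded

namespace lp

noncomputable def tailSum (k : ℕ) : lp (fun _ : ℕ => ℝ) 1 →ₗ[ℝ] ℝ where
  toFun y := ∑' j, y (j + k)
  map_add' y z := by
    simp only [AddSubgroup.coe_add]
    exact ((summable_nat_add_iff k).2 (lp.memℓp y).summable_of_one).tsum_add
      ((summable_nat_add_iff k).2 (lp.memℓp z).summable_of_one)
  map_smul' c y := by
    simp only [lp.coeFn_smul, Pi.smul_apply, smul_eq_mul, RingHom.id_apply]
    exact tsum_mul_left

theorem abs_tailSum_le (k : ℕ) (y : lp (fun _ : ℕ => ℝ) 1) : |tailSum k y| ≤ ‖y‖ := by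
  have hy : Summable fun j => ‖y j‖ := by simpa using (lp.memℓp y).summable (by norm_num)
  calc |tailSum k y| = ‖∑' j, y (j + k)‖ := rfl
    _ ≤ ∑' j, ‖y (j + k)‖ := norm_tsum_le_tsum_norm ((summable_nat_add_iff k).2 hy)
    _ ≤ ∑' j, ‖y j‖ := tsum_comp_le_tsum_of_inj hy (fun _ => norm_nonneg _) (add_left_injective k)
    _ = ‖y‖ := by simp [lp.norm_eq_tsum_rpow (show (0 : ℝ) < (1 : ENNReal).toReal by norm_num)]

theorem tailSum_single (k n : ℕ) : tailSum k (lp.single 1 n 1) = if k ≤ n then 1 else 0 := by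
  simp only [tailSum, LinearMap.coe_mk, AddHom.coe_mk, lp.single_apply, Pi.single_apply]
  split_ifs with hkn
  · simp_rw [show ∀ j, j + k = n ↔ j = n - k by omega]
    exact tsum_ite_eq (n - k) _
  · simp [show ∀ j, j + k ≠ n by omega]

end lp

section LocallyConvex

variable {E : Type*} [AddCommGroup E] [Module ℝ E] [TopologicalSpace E] [PolynormableSpace ℝ E]

theorem Module.Dual.continuous_of_abs_le_seminorm (Λ : Module.Dual ℝ E) {p : Seminorm ℝ E}
    (hp : Continuous p) (hΛ : ∀ x, |Λ x| ≤ p x) : Continuous Λ :=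
  (PolynormableSpace.withSeminorms ℝ E).continuous_real_rng Λ
    ⟨{⟨p, hp⟩}, 1, fun x => by simpa using (le_abs_self _).trans (hΛ x)⟩

/-- The limit exists in the compact product `∏ₓ [-p x, p x]`, and is linear. -/
theorem StrongDual.exists_tendsto_ultrafilter_of_abs_le_seminorm {ι : Type*} (l : Ultrafilter ι)
    (f : ι → StrongDual ℝ E) {p : Seminorm ℝ E} (hp : Continuous p)
    (hf : ∀ i x, |f i x| ≤ p x) :
    ∃ Λ : StrongDual ℝ E, ∀ x, Tendsto (fun i => f i x) l (𝓝 (Λ x)) := by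
  have hK : IsCompact (Set.univ.pi fun x => Set.Icc (-p x) (p x)) :=
    isCompact_univ_pi fun x => isCompact_Icc
  obtain ⟨Λ, hΛK, hΛ⟩ := hK.ultrafilter_le_nhds (l.map fun i => ⇑(f i))
    (le_principal_iff.2 <| mem_map.2 <| univ_mem' fun i x _ => abs_le.1 (hf i x))
  have hlim : Tendsto (fun i x => f i x) l (𝓝 Λ) := hΛ
  let Λ' : Module.Dual ℝ E := linearMapOfTendsto Λ (fun i => (f i : E →ₗ[ℝ] ℝ)) hlim
  have hΛp : ∀ x, |Λ' x| ≤ p x := fun x => abs_le.2 (hΛK x trivial)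
  exact ⟨⟨Λ', Λ'.continuous_of_abs_le_seminorm hp hΛp⟩,
    fun x => (continuous_apply x).tendsto Λ |>.comp hlim⟩

end LocallyConvex

theorem EquivL1Basis.exists_tailSum_extensions {E : Type*} [AddCommGroup E] [Module ℝ E]
    [TopologicalSpace E] [IsTopologicalAddGroup E] [ContinuousSMul ℝ E] [PolynormableSpace ℝ E]
    {a : ℕ → E} (ha : EquivL1Basis E a) :
    ∃ (f : ℕ → StrongDual ℝ E) (p : Seminorm ℝ E), Continuous p ∧ (∀ k x, |f k x| ≤ p x) ∧
      ∀ k n, f k (a n) = if k ≤ n then 1 else 0 := by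
  obtain ⟨R, hR, -, hRa⟩ := ha
  obtain ⟨p, hp, hRp⟩ := Seminorm.exists_le_comp_of_isInducing
    (p := (normSeminorm ℝ _).comp R) hR.continuous.norm (f := Submodule.subtype _)
    IsInducing.subtypeVal
  choose f hfM hfp using fun k => Module.Dual.exists_continuous_extension_of_le_seminorm_real _
    ((lp.tailSum k).comp R) hp fun y =>
      (le_abs_self _).trans ((lp.abs_tailSum_le k (R y)).trans (hRp y))
  refine ⟨f, p, hp, hfp, fun k n => ?_⟩
  rw [← lp.tailSum_single, ← hRa n]
  exact hfM k ⟨a n, _⟩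

theorem continuous_weakTop {E : Type*} [AddCommGroup E] [Module ℝ E] [TopologicalSpace E]
    (φ : StrongDual ℝ E) : Continuous[weakTop E, _] φ :=
  continuous_iff_le_induced.2 <| induced_mono (continuous_apply φ).le_induced |>.trans_eq
    (induced_compose ..)

/-- A sequence equivalent to the unit basis of ℓ¹ is not functionally bounded
in the weak topology. -/
theorem l1_basis_sequence_not_weakly_functionally_bounded
    (E : Type*) [AddCommGroup E] [Module ℝ E] [TopologicalSpace E]
    [IsTopologicalAddGroup E] [ContinuousSMul ℝ E] [LocallyConvexSpace ℝ E]
    (a : ℕ → E) (ha : EquivL1Basis E a) :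
    ¬ FunBounded (weakTop E) (Set.range a) := by
  obtain ⟨f, p, hp, hfp, hfa⟩ := ha.exists_tailSum_extensions
  obtain ⟨Λ, hΛ⟩ :=
    StrongDual.exists_tendsto_ultrafilter_of_abs_le_seminorm (hyperfilter ℕ) f hp hfp
  have hΛa : ∀ n, Λ (a n) = 0 := fun n =>
    tendsto_nhds_unique (hΛ (a n)) <| tendsto_const_nhds.congr' <|
      ((eventually_gt_atTop n).filter_mono Nat.hyperfilter_le_atTop).mono fun k hk => by
        simp [hfa, hk.not_ge]
  refine @not_funBounded_range_of_exists_lt_one E (weakTop E) (fun k => ⇑(f k - Λ))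
    (fun k => continuous_weakTop (f k - Λ)) (fun x => ?_) a fun k n hkn => by simp [hfa, hkn, hΛa]
  have hsmall : Tendsto (fun k => (f k - Λ) x) (hyperfilter ℕ) (𝓝 0) := by
    simpa using (hΛ x).sub_const (Λ x)
  exact (hsmall.eventually (gt_mem_nhds one_pos)).exists
end

section
/- Let T : ℓ¹ → ℓ^∞ be a linear isometric embedding of the real Banach space ℓ¹ into the real Banach space ℓ^∞. Then the set {T(e_n) : n ∈ ℕ}, where e_n is the n-th unit basis vector of ℓ¹, is not functionally bounded in ℓ^∞ endowed with its weak topology σ(ℓ^∞,(ℓ^∞)'). -/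
open Filter Topology Bornology

/-! Write `x n = T (e n)`. Since `T` is an isometry, Hahn–Banach applied to
`T (∑_{n < m} s n • e n)` gives, for every sign sequence `s` and every `m`, a functional of norm `≤ 1` taking the value `s n`
at `x n` for all `n < m`; a weak-* cluster point of these (Banach–Alaoglu) realizes all of `s`.
Take such `ψ k` with `ψ k (x n) = -1` for `n < k` and `1` otherwise, and a weak-* cluster point
`ψlim` of `(ψ k)`, so that `ψlim (x n) = -1` for all `n`. The weakly continuous map
`Θ y = (ψ k y - ψlim y)_k` into the metrizable space `ℝ^ℕ` sends `x n` to a sequence converging to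
the constant `2`, which is not a value of `Θ` because `ψ k y` clusters at `ψlim y`. Hence
`y ↦ 1 / dist (Θ y) 2` is weakly continuous and unbounded on `{x n}`. -/

theorem FunBounded.mem_range_of_mem_closure_image {X Y : Type*} {t : TopologicalSpace X}
    [TopologicalSpace Y] [TopologicalSpace.MetrizableSpace Y] {A : Set X}
    (hA : FunBounded t A) {Θ : X → Y} (hΘ : Continuous[t, _] Θ) {c : Y}
    (hc : c ∈ closure (Θ '' A)) : c ∈ Set.range Θ := by
  let _ := t
  let _ := TopologicalSpace.metrizableSpaceMetric Y
  by_contra hcΘ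
  have hdist : ∀ x, dist (Θ x) c ≠ 0 := fun x h => hcΘ ⟨x, dist_eq_zero.1 h⟩
  obtain ⟨C, hC⟩ := hA (fun x => (dist (Θ x) c)⁻¹) ((hΘ.dist continuous_const).inv₀ hdist)
  obtain ⟨_, ⟨a, ha, rfl⟩, hca⟩ :=
    Metric.mem_closure_iff.1 hc (|C| + 1)⁻¹ (by positivity)
  have hpos : 0 < dist (Θ a) c := dist_pos.2 fun h => hcΘ ⟨a, h⟩
  have hlarge : |C| + 1 < (dist (Θ a) c)⁻¹ := by
    rw [dist_comm] at hca
    exact lt_inv_of_lt_inv₀ hpos hca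
  have hbound := hC a ha
  rw [abs_of_pos (inv_pos.2 hpos)] at hbound
  linarith [le_abs_self C]

theorem continuous_weakTop_apply {E : Type*} [AddCommGroup E] [Module ℝ E] [TopologicalSpace E]
    (φ : E →L[ℝ] ℝ) : Continuous[weakTop E, _] φ :=
  @Continuous.comp E ((E →L[ℝ] ℝ) → ℝ) ℝ (weakTop E) _ _ (fun x f => f x) (fun p => p φ)
    (continuous_apply φ) continuous_induced_dom

theorem StrongDual.exists_tendsto_apply_of_norm_le {𝕜 E ι : Type*} [NontriviallyNormedField 𝕜]
    [ProperSpace 𝕜] [SeminormedAddCommGroup E] [NormedSpace 𝕜 E] (q : Ultrafilter ι)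
    {φ : ι → StrongDual 𝕜 E} {r : ℝ} (hφ : ∀ i, ‖φ i‖ ≤ r) :
    ∃ ψ : StrongDual 𝕜 E, ‖ψ‖ ≤ r ∧ ∀ x, Tendsto (fun i => φ i x) q (𝓝 (ψ x)) := by
  obtain ⟨ψ, hψr, hψ⟩ :=
    (WeakDual.isCompact_closedBall (𝕜 := 𝕜) (E := E) 0 r).ultrafilter_le_nhds
      (q.map (WeakDual.toStrongDual.symm ∘ φ)) <| by
        rw [Ultrafilter.coe_map, le_principal_iff, mem_map]
        exact univ_mem' fun i => by simpa using hφ i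
  refine ⟨WeakDual.toStrongDual ψ, by simpa using hψr, fun x => ?_⟩
  exact tendsto_iff_forall_eval_tendsto_topDualPairing.1 hψ x

local notation "ℓ¹" => lp (fun _ : ℕ => ℝ) 1

section IsometricCopyOfL1

variable {E : Type*} [SeminormedAddCommGroup E] [NormedSpace ℝ E] (T : ℓ¹ →ₗᵢ[ℝ] E)
  {s : ℕ → ℝ}

theorem LinearIsometry.exists_dual_apply_single_eq_on_finset (hs : ∀ n, |s n| = 1)
    (F : Finset ℕ) :
    ∃ φ : StrongDual ℝ E, ‖φ‖ ≤ 1 ∧ ∀ n ∈ F, φ (T (lp.single 1 n 1)) = s n := by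
  set v : ℓ¹ := ∑ n ∈ F, lp.single 1 n (s n)
  have hv : ‖v‖ = F.card := by
    simpa [hs] using lp.norm_sum_single (p := 1) (by norm_num) s F
  obtain ⟨φ, hφ, hφv⟩ := exists_dual_vector'' ℝ (T v)
  have hterm : ∀ n ∈ F, s n * φ (T (lp.single 1 n 1)) ≤ 1 := fun n _ =>
    calc s n * φ (T (lp.single 1 n 1)) ≤ |s n| * ‖φ (T (lp.single 1 n 1))‖ := by
          rw [Real.norm_eq_abs, ← abs_mul]; exact le_abs_self _
      _ ≤ 1 * (1 * ‖lp.single 1 n (1 : ℝ)‖) := by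
          rw [hs, ← T.norm_map]; gcongr; exact φ.le_of_opNorm_le hφ _
      _ = 1 := by simp [lp.norm_single]
  have hsingle : ∀ n, (lp.single 1 n (s n) : ℓ¹) = s n • lp.single 1 n 1 := fun n => by
    rw [← lp.single_smul (E := fun _ => ℝ), smul_eq_mul, mul_one]
  have hsum : ∑ n ∈ F, s n * φ (T (lp.single 1 n 1)) = ∑ n ∈ F, 1 := by
    have hφv' : φ (T v) = F.card := by simpa [T.norm_map, hv] using hφv
    simpa [v, hsingle] using hφv'
  refine ⟨φ, hφ, fun n hn => ?_⟩
  have h1 := (Finset.sum_eq_sum_iff_of_le hterm).1 hsum n hn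
  have h2 : s n * s n = 1 := by rw [← abs_mul_abs_self, hs, one_mul]
  calc φ (T (lp.single 1 n 1)) = s n * s n * φ (T (lp.single 1 n 1)) := by rw [h2, one_mul]
    _ = s n := by rw [mul_assoc, h1, mul_one]

theorem LinearIsometry.exists_dual_apply_single_eq (hs : ∀ n, |s n| = 1) :
    ∃ φ : StrongDual ℝ E, ‖φ‖ ≤ 1 ∧ ∀ n, φ (T (lp.single 1 n 1)) = s n := by
  choose φ hφ hφs using fun m => T.exists_dual_apply_single_eq_on_finset hs (Finset.range m)
  obtain ⟨ψ, hψ, hlim⟩ := StrongDual.exists_tendsto_apply_of_norm_le (hyperfilter ℕ) hφ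
  refine ⟨ψ, hψ, fun n => tendsto_nhds_unique (hlim _) (tendsto_const_nhds.congr' ?_)⟩
  filter_upwards [(eventually_gt_atTop n).filter_mono Nat.hyperfilter_le_atTop] with m hm
  exact (hφs m n (Finset.mem_range.2 hm)).symm

theorem LinearIsometry.not_funBounded_weakTop_range_single :
    ¬ FunBounded (weakTop E) (Set.range fun n => T (lp.single 1 n 1)) := by
  intro hA
  choose ψ hψ hψx using fun k : ℕ => T.exists_dual_apply_single_eq
    (s := fun n => if n < k then -1 else 1) (fun n => by split_ifs <;> simp)
  obtain ⟨ψlim, -, hψlim⟩ := StrongDual.exists_tendsto_apply_of_norm_le (hyperfilter ℕ) hψ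
  have hψlimx : ∀ n, ψlim (T (lp.single 1 n 1)) = -1 := fun n =>
    tendsto_nhds_unique (hψlim _) <| tendsto_const_nhds.congr' <| by
      filter_upwards [(eventually_gt_atTop n).filter_mono Nat.hyperfilter_le_atTop] with k hk
      simp [hψx, hk]
  set Θ : E → ℕ → ℝ := fun y k => (ψ k - ψlim) y
  have hΘ : Continuous[weakTop E, _] Θ :=
    @continuous_pi E ℕ (fun _ => ℝ) (weakTop E) _ Θ fun k => continuous_weakTop_apply (ψ k - ψlim)
  have hlim : Tendsto (fun n => Θ (T (lp.single 1 n 1))) atTop (𝓝 fun _ => 2) := by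
    refine tendsto_pi_nhds.2 fun k => tendsto_const_nhds.congr' ?_
    filter_upwards [eventually_ge_atTop k] with n hn
    norm_num [Θ, hψx, hψlimx, not_lt.2 hn]
  obtain ⟨y, hy⟩ := hA.mem_range_of_mem_closure_image hΘ
    (mem_closure_of_tendsto hlim (Eventually.of_forall fun n => Set.mem_image_of_mem Θ ⟨n, rfl⟩))
  have hψy : Tendsto (fun k => ψ k y) (hyperfilter ℕ) (𝓝 (ψlim y + 2)) :=
    tendsto_const_nhds.congr fun k => by
      have hΘk : ψ k y - ψlim y = 2 := congrFun hy k
      linarith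
  linarith [tendsto_nhds_unique (hψlim y) hψy]

end IsometricCopyOfL1

/-- If `T : ℓ¹ → ℓ^∞` is a linear isometric embedding, then the image of the
unit basis of ℓ¹ under `T` is not functionally bounded in ℓ^∞ with its weak topology. -/
theorem image_of_l1_basis_not_weakly_functionally_bounded_in_linfty
    (T : lp (fun _ : ℕ => ℝ) 1 →ₗᵢ[ℝ] lp (fun _ : ℕ => ℝ) ⊤) :
    ¬ FunBounded (weakTop (lp (fun _ : ℕ => ℝ) ⊤))
      (Set.range fun n : ℕ => T (lp.single 1 n 1)) :=
  T.not_funBounded_weakTop_range_single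
end

section
/- Let (E,τ) be a real quasi-complete locally convex space in which every separable von Neumann bounded subset is metrizable (as a subspace of E). If E has the Schur property, then every subset of E that is compact in the weak topology σ(E,E') is compact in the original topology τ. -/
/-!
Schur's property first makes a weakly compact set `A` bounded: for `xₙ ∈ A` and scalars
`εₙ → 0`, the sequence `εₙ • xₙ` is weakly null, hence null. Given a sequence in `A`, the closed
convex hull `D` of its range is bounded and separable, hence metrizable and second countable, so
countably many functionals separate the points of `D` as well as the whole dual does. By Mazur,
`D` contains the weak closure of the sequence, and on this weakly compact set those countably
many functionals make the weak topology sequentially compact; Schur turns a weakly convergent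
subsequence into a convergent one. So `A` is sequentially compact, hence totally bounded, and
quasi-completeness makes its closure compact. Finally, a limit of an ultrafilter on `A` is weakly
inseparable from a weak limit lying in `A`, and Schur upgrades this to inseparability in the
original topology.
-/

open Filter Topology Bornology

open Set TopologicalSpace

section Separability

variable {X Y : Type*} [TopologicalSpace X] [TopologicalSpace Y]

theorem separableSpace_image {s : Set X} [SeparableSpace s] {f : X → Y} (hf : Continuous f) :
    SeparableSpace (f '' s) :=
  imageFactorization_surjective.denseRange.separableSpace
    ((hf.comp continuous_subtype_val).subtype_mk _)

theorem separableSpace_iUnion {ι : Type*} [Countable ι] {s : ι → Set X}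
    [∀ i, SeparableSpace (s i)] : SeparableSpace (⋃ i, s i) := by
  rw [← isSeparable_univ_iff]
  have hcover : (univ : Set (⋃ i, s i)) = ⋃ i, range (inclusion (subset_iUnion s i)) := by
    refine (eq_univ_of_forall fun y => ?_).symm
    obtain ⟨i, hi⟩ := mem_iUnion.1 y.2
    exact mem_iUnion.2 ⟨i, ⟨y, hi⟩, rfl⟩
  rw [hcover]
  exact .iUnion fun i => isSeparable_range (continuous_inclusion _)

theorem convexHull_eq_iUnion_finset_subtype {E : Type*} [AddCommGroup E] [Module ℝ E]
    (S : Set E) : convexHull ℝ S = ⋃ t : Finset S, convexHull ℝ (Subtype.val '' (t : Set S)) := by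
  classical
  refine subset_antisymm ?_ (iUnion_subset fun t => convexHull_mono (by simp))
  rw [convexHull_eq_union_convexHull_finite_subsets]
  refine iUnion₂_subset fun t ht => subset_iUnion_of_subset (t.subtype (· ∈ S)) ?_
  exact convexHull_mono fun x hx => ⟨⟨x, ht hx⟩, by simpa using hx, rfl⟩

theorem Set.Countable.separableSpace_convexHull {E : Type*} [AddCommGroup E] [Module ℝ E]
    [TopologicalSpace E] [IsTopologicalAddGroup E] [ContinuousSMul ℝ E] {S : Set E}
    (hS : S.Countable) : SeparableSpace (convexHull ℝ S) := by
  have : Countable S := hS.to_subtype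
  have (t : Finset S) : SeparableSpace (convexHull ℝ (Subtype.val '' (t : Set S))) := by
    rw [(t.finite_toSet.image _).convexHull_eq_image]
    exact separableSpace_image (LinearMap.continuous_on_pi _)
  rw [convexHull_eq_iUnion_finset_subtype]
  exact separableSpace_iUnion

end Separability

section Separating

variable {X Y : Type*} [TopologicalSpace X] [TopologicalSpace Y] [T2Space Y]

theorem exists_countable_separating_subfamily [SecondCountableTopology X] {ι : Type*}
    (f : ι → X → Y) (hf : ∀ i, Continuous (f i)) :
    ∃ T : Set ι, T.Countable ∧ ∀ x y, (∀ i ∈ T, f i x = f i y) → ∀ i, f i x = f i y := by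
  obtain ⟨T, hT, hcover⟩ := isOpen_iUnion_countable (fun i => {p : X × X | f i p.1 ≠ f i p.2})
    fun i => isOpen_ne_fun ((hf i).comp continuous_fst) ((hf i).comp continuous_snd)
  refine ⟨T, hT, fun x y hxy i => by_contra fun hi => ?_⟩
  have hmem : (x, y) ∈ ⋃ i ∈ T, {p : X × X | f i p.1 ≠ f i p.2} :=
    hcover ▸ mem_iUnion.2 ⟨i, hi⟩
  obtain ⟨j, hj, hne⟩ := mem_iUnion₂.1 hmem
  exact hne (hxy j hj)

theorem IsCompact.isSeqCompact_of_continuous_separating [FirstCountableTopology Y] {K : Set X}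
    (hK : IsCompact K) {Φ : X → Y} (hΦ : Continuous Φ)
    (hsep : ∀ x ∈ K, ∀ y ∈ K, Φ x = Φ y → Inseparable x y) : IsSeqCompact K := by
  intro u hu
  obtain ⟨-, ⟨a, ha, rfl⟩, φ, hφ, hlim⟩ :=
    (hK.image hΦ).isSeqCompact fun n => mem_image_of_mem Φ (hu n)
  refine ⟨a, ha, φ, hφ, ?_⟩
  have hcluster (x : X) (hx : x ∈ K) (hux : MapClusterPt x atTop (u ∘ φ)) :
      x ∈ {x | Inseparable x a} :=
    hsep x hx a ha (eq_of_nhds_neBot (hux.map hΦ.continuousAt hlim))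
  exact (hK.tendsto_nhdsSet_of_mapClusterPt (.of_forall fun n => hu _) hcluster).trans
    (nhdsSet_le.2 fun x hx => hx.nhds_eq.le)

end Separating

theorem Bornology.IsVonNBounded.closure_of_regularSpace {𝕜 E : Type*} [NormedField 𝕜]
    [AddCommGroup E] [Module 𝕜 E] [TopologicalSpace E] [RegularSpace E] [ContinuousConstSMul 𝕜 E]
    {A : Set E} (hA : IsVonNBounded 𝕜 A) : IsVonNBounded 𝕜 (_root_.closure A) := by
  intro V hV
  obtain ⟨W, hW, hWcl, hWV⟩ := exists_mem_nhds_isClosed_subset hV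
  filter_upwards [hA hW, eventually_ne_cobounded (0 : 𝕜)] with r hr hr0
  exact (closure_minimal hr (hWcl.smul_of_ne_zero hr0)).trans (smul_set_mono hWV)

theorem Bornology.IsVonNBounded.convexHull {E : Type*} [AddCommGroup E] [Module ℝ E]
    [TopologicalSpace E] [IsTopologicalAddGroup E] [LocallyConvexSpace ℝ E] {A : Set E}
    (hA : IsVonNBounded ℝ A) : IsVonNBounded ℝ (convexHull ℝ A) := by
  intro V hV
  obtain ⟨C, hC, hCconv, hCV⟩ := (locallyConvexSpace_iff_exists_convex_subset_zero ℝ E).1 ‹_› V hV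
  filter_upwards [hA hC] with r hr
  exact (convexHull_min hr (hCconv.smul r)).trans (smul_set_mono hCV)

section WeakSpace

variable {E : Type*} [AddCommGroup E] [Module ℝ E] [TopologicalSpace E]

theorem isCompact_weakTop_iff {A : Set E} :
    @IsCompact E (weakTop E) A ↔ IsCompact (toWeakSpace ℝ E '' A) := by
  rw [show toWeakSpace ℝ E '' A = A from image_id A]
  rfl

theorem inseparable_toWeakSpace_iff {x y : E} :
    Inseparable (toWeakSpace ℝ E x) (toWeakSpace ℝ E y) ↔ ∀ f : E →L[ℝ] ℝ, f x = f y := by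
  have hind : Topology.IsInducing (fun (x : WeakSpace ℝ E) (f : E →L[ℝ] ℝ) => f x) := ⟨rfl⟩
  rw [← hind.inseparable_iff, inseparable_iff_eq, funext_iff]
  rfl

theorem IsCompact.isSeqCompact_of_subset_secondCountable {D : Set E} [SecondCountableTopology D]
    {K : Set (WeakSpace ℝ E)} (hK : IsCompact K) (hKD : K ⊆ toWeakSpace ℝ E '' D) :
    IsSeqCompact K := by
  obtain ⟨T, hT, hsep⟩ := exists_countable_separating_subfamily
    (fun (f : E →L[ℝ] ℝ) (x : D) => f x) fun f => f.continuous.comp continuous_subtype_val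
  have : Countable T := hT.to_subtype
  refine hK.isSeqCompact_of_continuous_separating
    (Φ := fun x (f : T) => (f : E →L[ℝ] ℝ) ((toWeakSpace ℝ E).symm x))
    (continuous_pi fun f => WeakBilin.eval_continuous _ f.1) fun x hx y hy hxy => ?_
  obtain ⟨x, hxD, rfl⟩ := hKD hx
  obtain ⟨y, hyD, rfl⟩ := hKD hy
  exact inseparable_toWeakSpace_iff.2 (hsep ⟨x, hxD⟩ ⟨y, hyD⟩ fun f hf => congr_fun hxy ⟨f, hf⟩)

end WeakSpace

namespace HasSchur

variable {E : Type*} [AddCommGroup E] [Module ℝ E] [TopologicalSpace E]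

theorem tendsto (hE : HasSchur E) {u : ℕ → E} {a : E}
    (hu : Tendsto (fun n => toWeakSpace ℝ E (u n)) atTop (𝓝 (toWeakSpace ℝ E a))) :
    Tendsto u atTop (𝓝 a) :=
  hE u a hu

theorem inseparable (hE : HasSchur E) {x y : E}
    (h : Inseparable (toWeakSpace ℝ E x) (toWeakSpace ℝ E y)) : Inseparable x y := by
  have hspec (x y : E) (h : Inseparable (toWeakSpace ℝ E x) (toWeakSpace ℝ E y)) : x ⤳ y := by
    refine specializes_iff_pure.2 fun s hs => ?_
    obtain ⟨-, hxs⟩ :=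
      ((hE.tendsto (u := fun _ => x) (h.nhds_eq ▸ tendsto_const_nhds)).eventually_mem hs).exists
    exact hxs
  exact (hspec x y h).antisymm (hspec y x h.symm)

theorem isVonNBounded [ContinuousSMul ℝ E] (hE : HasSchur E) {A : Set E}
    (hA : IsCompact (toWeakSpace ℝ E '' A)) : IsVonNBounded ℝ A := by
  refine isVonNBounded_of_smul_tendsto_zero (ε := fun n : ℕ => 1 / ((n : ℝ) + 1)) (l := atTop)
    (.of_forall fun n => by positivity) fun x hx => hE.tendsto ?_
  simpa [Pi.smul_def'] using (hA.isVonNBounded ℝ).smul_tendsto_zero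
    (x := fun n => toWeakSpace ℝ E (x n)) (.of_forall fun n => mem_image_of_mem _ (hx n))
    tendsto_one_div_add_atTop_nhds_zero_nat

theorem isSeqCompact [IsTopologicalAddGroup E] [ContinuousSMul ℝ E] [LocallyConvexSpace ℝ E]
    (hE : HasSchur E) (hmetr : ∀ A : Set E, IsVonNBounded ℝ A → IsSeparable A → MetrizableSpace A)
    {A : Set E} (hA : IsCompact (toWeakSpace ℝ E '' A)) : IsSeqCompact A := by
  intro x hx
  set C := convexHull ℝ (range x)
  have hCb : IsVonNBounded ℝ C := ((hE.isVonNBounded hA).subset (range_subset_iff.2 hx)).convexHull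
  have : SeparableSpace C := (countable_range x).separableSpace_convexHull
  have : SeparableSpace (closure C) :=
    ((denseRange_inclusion_iff subset_closure).2 subset_rfl).separableSpace (continuous_inclusion _)
  have : MetrizableSpace (closure C) := hmetr _ hCb.closure_of_regularSpace (.of_subtype _)
  have : SecondCountableTopology (closure C) := by
    let := pseudoMetrizableSpaceUniformity (closure C)
    have := pseudoMetrizableSpaceUniformity_countably_generated (closure C)
    exact UniformSpace.secondCountable_of_separable _
  have hKC : toWeakSpace ℝ E '' A ∩ closure (toWeakSpace ℝ E '' range x) ⊆
      toWeakSpace ℝ E '' closure C := by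
    rw [(convex_convexHull ℝ _).toWeakSpace_closure ℝ]
    exact inter_subset_right.trans (closure_mono (image_mono (subset_convexHull ℝ _)))
  obtain ⟨-, ⟨⟨a, ha, rfl⟩, -⟩, φ, hφ, hlim⟩ :=
    (hA.inter_right isClosed_closure).isSeqCompact_of_subset_secondCountable hKC
      (x := fun n => toWeakSpace ℝ E (x n))
      fun n => ⟨mem_image_of_mem _ (hx n), subset_closure (mem_image_of_mem _ (mem_range_self n))⟩
  exact ⟨a, ha, φ, hφ, hE.tendsto hlim⟩

theorem isCompact_of_isCompact_closure (hE : HasSchur E) {A : Set E}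
    (hA : IsCompact (toWeakSpace ℝ E '' A)) (hcl : IsCompact (closure A)) : IsCompact A := by
  refine isCompact_iff_ultrafilter_le_nhds.2 fun F hF => ?_
  obtain ⟨c, -, hc⟩ := hcl.ultrafilter_le_nhds F (hF.trans (principal_mono.2 subset_closure))
  obtain ⟨-, ⟨a, ha, rfl⟩, haF⟩ := hA.ultrafilter_le_nhds (F.map (toWeakSpace ℝ E))
    (by simpa [(toWeakSpace ℝ E).injective.preimage_image] using hF)
  have hca := tendsto_nhds_unique_inseparable
    (((toWeakSpaceCLM ℝ E).continuous.tendsto c).comp hc) haF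
  exact ⟨a, ha, hc.trans (hE.inseparable hca).nhds_eq.le⟩

end HasSchur

/-- A real quasi-complete locally convex space whose separable von Neumann
bounded sets are metrizable and which has the Schur property weakly respects compactness. -/
theorem schur_weakly_respects_compactness_of_quasiComplete
    (E : Type*) [AddCommGroup E] [Module ℝ E] [UniformSpace E] [IsUniformAddGroup E]
    [ContinuousSMul ℝ E] [LocallyConvexSpace ℝ E]
    (hqc : ∀ A : Set E, IsClosed A → Bornology.IsVonNBounded ℝ A → IsComplete A)
    (hmetr : ∀ A : Set E, Bornology.IsVonNBounded ℝ A → TopologicalSpace.IsSeparable A →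
      TopologicalSpace.MetrizableSpace A)
    (hSchur : HasSchur E) :
    ∀ A : Set E, @IsCompact E (weakTop E) A → IsCompact A := by
  intro A hA
  rw [isCompact_weakTop_iff] at hA
  have hcl : IsCompact (closure A) := isCompact_iff_totallyBounded_isComplete.2
    ⟨(hSchur.isSeqCompact hmetr hA).totallyBounded.closure,
      hqc _ isClosed_closure (hSchur.isVonNBounded hA).closure_of_regularSpace⟩
  exact hSchur.isCompact_of_isCompact_closure hA hcl
end

section
/- Let (E,τ) be a real locally convex space such that both (E,τ) and E endowed with the weak topology σ(E,E') are μ-spaces. Suppose every subset of E that is functionally bounded in σ(E,E') is functionally bounded in τ. Then every subset A of E that is not functionally bounded in (E,τ) contains an infinite subset B which is discrete in the topology σ(E,E') and C-embedded in E endowed with σ(E,E'). -/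
/-!
Weakly functionally bounded sets are functionally bounded, so `A` is not functionally bounded
for σ(E,E') either, and the rest holds in every topological space. A continuous `f` unbounded
on `A` lets us pick points of `A` whose `f`-values are pairwise at distance at least `1`. On
the set `B` of these points `f` is a closed embedding of a discrete space into `ℝ`, so `B` is
discrete, and by Tietze every continuous function on `B` factors through `f` as `φ ∘ f` with
`φ : ℝ → ℝ` continuous.
-/

open Filter Topology Bornology

/-- A subset `B` is discrete for the topology `t` if its `t`-subspace topology is discrete. -/
def DiscreteIn {E : Type*} (t : TopologicalSpace E) (B : Set E) : Prop :=
  @DiscreteTopology B (TopologicalSpace.induced (Subtype.val : B → E) t)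

/-- A subset `B` is C-embedded for the topology `t` if every real-valued function that is
continuous on `B` (with the `t`-subspace topology) extends to a `t`-continuous function
on the whole space. -/
def CEmbeddedIn {E : Type*} (t : TopologicalSpace E) (B : Set E) : Prop :=
  ∀ f : B → ℝ,
    @Continuous B ℝ (TopologicalSpace.induced (Subtype.val : B → E) t) _ f →
    ∃ g : E → ℝ, @Continuous E ℝ t _ g ∧ ∀ x : B, g x = f x

open Set

lemma pairwise_one_le_dist_of_add_one_lt {u : ℕ → ℝ} (hu : ∀ n, u n + 1 < u (n + 1)) :
    Pairwise fun m n => 1 ≤ dist (u m) (u n) := by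
  have hlt : ∀ m n, m < n → u m + 1 ≤ u n := by
    intro m n hmn
    induction n, hmn using Nat.le_induction with
    | base => exact (hu m).le
    | succ k _ ih => linarith [hu k]
  intro m n hmn
  rw [Real.dist_eq]
  rcases hmn.lt_or_gt with h | h
  · exact le_abs.2 (Or.inr (by linarith [hlt m n h]))
  · exact le_abs.2 (Or.inl (by linarith [hlt n m h]))

lemma exists_infinite_pairwise_one_le_dist_of_not_bddAbove {α : Type*} {f : α → ℝ}
    {A : Set α} (hA : ¬ BddAbove (f '' A)) :
    ∃ B ⊆ A, B.Infinite ∧ B.Pairwise fun a b => 1 ≤ dist (f a) (f b) := by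
  choose next hnextA hnext using fun r : ℝ => by simpa using not_bddAbove_iff.1 hA r
  let x : ℕ → α := fun n => Nat.rec (next 0) (fun _ a => next (f a + 1)) n
  have hsep : Pairwise fun m n => 1 ≤ dist (f (x m)) (f (x n)) :=
    pairwise_one_le_dist_of_add_one_lt fun n => hnext _
  have hinj : Function.Injective x := fun m n hmn =>
    by_contra fun hne => (hsep hne).not_gt (by simp [hmn])
  refine ⟨range x, ?_, infinite_range_of_injective hinj, hsep.range_pairwise⟩
  rintro _ ⟨n, rfl⟩
  cases n <;> exact hnextA _

section

variable {X : Type*} [t : TopologicalSpace X]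

lemma exists_continuous_not_bddAbove_of_not_funBounded {A : Set X} (hA : ¬ FunBounded t A) :
    ∃ f : X → ℝ, Continuous f ∧ ¬ BddAbove (f '' A) := by
  unfold FunBounded at hA
  push Not at hA
  obtain ⟨f, hf, hunb⟩ := hA
  refine ⟨fun x => |f x|, hf.abs, fun ⟨C, hC⟩ => ?_⟩
  obtain ⟨x, hxA, hCx⟩ := hunb C
  exact hCx.not_ge (hC (mem_image_of_mem _ hxA))

section

variable {f : X → ℝ} (hf : Continuous f) {B : Set X}
  (hB : B.Pairwise fun a b => 1 ≤ dist (f a) (f b))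
include hf hB

lemma discreteIn_of_pairwise_one_le_dist : DiscreteIn t B := by
  refine discreteTopology_iff_isOpen_singleton.2 fun b => ?_
  have hball : ({b} : Set B) = B.domRestrict f ⁻¹' Metric.ball (f b) 1 := by
    ext c
    refine ⟨by rintro rfl; simp [Set.domRestrict], fun hc => ?_⟩
    by_contra hne
    exact (hB c.2 b.2 (Subtype.coe_ne_coe.2 hne)).not_gt hc
  rw [hball]
  exact Metric.isOpen_ball.preimage (hf.comp continuous_subtype_val)

lemma cEmbeddedIn_of_pairwise_one_le_dist : CEmbeddedIn t B := by
  have : DiscreteTopology B := discreteIn_of_pairwise_one_le_dist hf hB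
  intro g hg
  have hemb : IsClosedEmbedding (B.domRestrict f) :=
    Metric.isClosedEmbedding_of_pairwise_le_dist one_pos
      fun a b hab => hB a.2 b.2 (Subtype.coe_ne_coe.2 hab)
  obtain ⟨φ, hφ⟩ := ContinuousMap.exists_extension' hemb ⟨g, hg⟩
  exact ⟨φ ∘ f, φ.continuous.comp hf, fun b => congrFun hφ b⟩

end

theorem exists_infinite_discreteIn_cEmbeddedIn_of_not_funBounded {A : Set X}
    (hA : ¬ FunBounded t A) :
    ∃ B ⊆ A, B.Infinite ∧ DiscreteIn t B ∧ CEmbeddedIn t B := by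
  obtain ⟨f, hf, hunb⟩ := exists_continuous_not_bddAbove_of_not_funBounded hA
  obtain ⟨B, hBA, hBinf, hB⟩ := exists_infinite_pairwise_one_le_dist_of_not_bddAbove hunb
  exact ⟨B, hBA, hBinf, discreteIn_of_pairwise_one_le_dist hf hB,
    cEmbeddedIn_of_pairwise_one_le_dist hf hB⟩

end

theorem non_funBounded_contains_weakly_discrete_C_embedded_general
    (E : Type*) [AddCommGroup E] [Module ℝ E] [τ : TopologicalSpace E]
    (h : ∀ A : Set E, FunBounded (weakTop E) A → FunBounded τ A) :
    ∀ A : Set E, ¬ FunBounded τ A →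
      ∃ B ⊆ A, B.Infinite ∧ DiscreteIn (weakTop E) B ∧ CEmbeddedIn (weakTop E) B :=
  fun A hA =>
    exists_infinite_discreteIn_cEmbeddedIn_of_not_funBounded (t := weakTop E) (mt (h A) hA)

/-- Let `E` be a real locally convex space such that `E` and `E` with the
weak topology are μ-spaces and `E` weakly respects functional boundedness. Then every set
which is not functionally bounded in `E` contains an infinite subset which is discrete and
C-embedded in the weak topology. -/
theorem non_funBounded_contains_weakly_discrete_C_embedded
    (E : Type*) [AddCommGroup E] [Module ℝ E] [τ : TopologicalSpace E]
    [IsTopologicalAddGroup E] [ContinuousSMul ℝ E] [LocallyConvexSpace ℝ E]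
    (hμ : ∀ A : Set E, FunBounded τ A → IsCompact (closure A))
    (hμw : ∀ A : Set E, FunBounded (weakTop E) A →
      @IsCompact E (weakTop E) (@closure E (weakTop E) A))
    (h : ∀ A : Set E, FunBounded (weakTop E) A → FunBounded τ A) :
    ∀ A : Set E, ¬ FunBounded τ A →
      ∃ B ⊆ A, B.Infinite ∧ DiscreteIn (weakTop E) B ∧ CEmbeddedIn (weakTop E) B :=
  non_funBounded_contains_weakly_discrete_C_embedded_general E (τ := τ) h
end

section
/- Every functionally bounded subset of a real locally convex space E is totally bounded. -/
/-!
If `A` is not totally bounded, some neighbourhood `U` of zero yields a sequence `xₙ ∈ A` with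
`xₙ - xₘ ∉ U` for `m < n`. For a small enough `V`, the translates `xₙ + V` then form a locally
finite family, and a topological group is completely regular, so there are bumps `φₙ ≥ 0`
supported in `xₙ + V` with `φₙ xₙ = 1`. The locally finite sum `∑ n • φₙ` is continuous and
unbounded on `A`.
-/

open Filter Topology Bornology Pointwise

open Function

section CompletelyRegular

variable {X : Type*} [t : TopologicalSpace X] [CompletelyRegularSpace X]

theorem CompletelyRegularSpace.exists_continuous_nonneg_support_subset {x : X} {s : Set X}
    (hs : s ∈ 𝓝 x) : ∃ f : X → ℝ, Continuous f ∧ 0 ≤ f ∧ f x = 1 ∧ support f ⊆ s := by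
  obtain ⟨g, hg, hgx, hgK⟩ := CompletelyRegularSpace.completely_regular x (interior s)ᶜ
    isOpen_interior.isClosed_compl (not_not.2 (mem_interior_iff_mem_nhds.2 hs))
  refine ⟨fun y => 1 - g y, by fun_prop, fun y => sub_nonneg.2 (g y).2.2, by simp [hgx], ?_⟩
  intro y hy
  by_contra hys
  exact hy (by simp [hgK fun h => hys (interior_subset h)])

theorem FunBounded.not_locallyFinite {A : Set X} (hA : FunBounded t A) {x : ℕ → X}
    (hxA : ∀ n, x n ∈ A) {s : ℕ → Set X} (hs : ∀ n, s n ∈ 𝓝 (x n)) : ¬ LocallyFinite s := by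
  intro hfin
  choose φ hφc hφ0 hφx hφs using fun n =>
    CompletelyRegularSpace.exists_continuous_nonneg_support_subset (hs n)
  have hsupp : ∀ n : ℕ, support (fun y => (n : ℝ) * φ n y) ⊆ s n := fun n =>
    (support_mul_subset_right _ _).trans (hφs n)
  have hf : Continuous fun y => ∑ᶠ n : ℕ, (n : ℝ) * φ n y :=
    continuous_finsum (fun n => continuous_const.mul (hφc n)) (hfin.subset hsupp)
  have hfx : ∀ n : ℕ, (n : ℝ) ≤ ∑ᶠ m : ℕ, (m : ℝ) * φ m (x n) := fun n => by
    simpa [hφx n] using single_le_finsum n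
      ((hfin.point_finite (x n)).subset fun m hm => hsupp m hm)
      (fun m => mul_nonneg m.cast_nonneg (hφ0 m _))
  obtain ⟨C, hC⟩ := hA _ hf
  obtain ⟨n, hn⟩ := exists_nat_gt C
  linarith [hfx n, hC (x n) (hxA n), le_abs_self (∑ᶠ m : ℕ, (m : ℝ) * φ m (x n))]

end CompletelyRegular

instance IsTopologicalAddGroup.toCompletelyRegularSpace {G : Type*} [AddGroup G]
    [TopologicalSpace G] [IsTopologicalAddGroup G] : CompletelyRegularSpace G :=
  .of_exists_uniformSpace ⟨IsTopologicalAddGroup.rightUniformSpace G, rfl⟩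

section AddCommGroup

variable {G : Type*} [AddCommGroup G]

theorem exists_seq_sub_notMem_of_forall_not_subset_add {A U : Set G}
    (h : ∀ F : Set G, F.Finite → ¬ A ⊆ F + U) :
    ∃ x : ℕ → G, (∀ n, x n ∈ A) ∧ ∀ m n, m < n → x n - x m ∉ U := by
  refine exists_seq_of_forall_finset_exists (· ∈ A) (fun b a => a - b ∉ U) fun F _ => ?_
  obtain ⟨a, haA, haF⟩ := Set.not_subset.1 (h F F.finite_toSet)
  exact ⟨a, haA, fun y hy hU => haF ⟨y, hy, a - y, hU, add_sub_cancel y a⟩⟩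

variable [TopologicalSpace G] [IsTopologicalAddGroup G]

theorem exists_nhds_zero_sub_sub_sub_subset {U : Set G} (hU : U ∈ 𝓝 0) :
    ∃ V ∈ 𝓝 0, V - V - (V - V) ⊆ U := by
  obtain ⟨W, hW, hWU⟩ := exists_nhds_zero_quarter hU
  refine ⟨W ∩ -W, inter_mem hW (neg_mem_nhds_zero G hW), ?_⟩
  intro z hz
  obtain ⟨_, ⟨a, ha, b, hb, rfl⟩, _, ⟨c, hc, d, hd, rfl⟩, rfl⟩ := hz
  have key := hWU ha.1 (Set.mem_neg.1 hb.2) (Set.mem_neg.1 hc.2) hd.1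
  rwa [show a + -b + -c + d = a - b - (c - d) by abel] at key

theorem locallyFinite_vadd_of_sub_notMem {V : Set G} (hV : V ∈ 𝓝 0) {x : ℕ → G}
    (hx : ∀ m n, m < n → x n - x m ∉ V - V - (V - V)) : LocallyFinite fun n => x n +ᵥ V := by
  intro y
  refine ⟨y +ᵥ V, vadd_mem_nhds_self.2 hV, Set.Subsingleton.finite ?_⟩
  have hdiff : ∀ m n, ((x m +ᵥ V) ∩ (y +ᵥ V)).Nonempty → ((x n +ᵥ V) ∩ (y +ᵥ V)).Nonempty →
      x n - x m ∈ V - V - (V - V) := by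
    rintro m n ⟨_, ⟨d, hd, rfl⟩, c, hc, hcd⟩ ⟨_, ⟨b, hb, rfl⟩, a, ha, hab⟩
    refine ⟨a - b, Set.sub_mem_sub ha hb, c - d, Set.sub_mem_sub hc hd, ?_⟩
    simp only [vadd_eq_add] at hab hcd
    show a - b - (c - d) = x n - x m
    rw [eq_sub_of_add_eq' hab, eq_sub_of_add_eq' hcd]
    abel
  intro m hm n hn
  by_contra hmn
  rcases lt_or_gt_of_ne hmn with h | h
  · exact hx m n h (hdiff m n hm hn)
  · exact hx n m h (hdiff n m hn hm)

end AddCommGroup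

theorem funBounded_totallyBounded_general
    (E : Type*) [AddCommGroup E] [τ : TopologicalSpace E]
    [IsTopologicalAddGroup E]
    (A : Set E) (hA : FunBounded τ A) :
    ∀ U ∈ nhds (0 : E), ∃ F : Set E, F.Finite ∧ A ⊆ F + U := by
  intro U hU
  by_contra! hcover
  obtain ⟨V, hV, hVU⟩ := exists_nhds_zero_sub_sub_sub_subset hU
  obtain ⟨x, hxA, hx⟩ := exists_seq_sub_notMem_of_forall_not_subset_add hcover
  exact hA.not_locallyFinite hxA (fun n => vadd_mem_nhds_self.2 hV)
    (locallyFinite_vadd_of_sub_notMem hV fun m n hmn h => hx m n hmn (hVU h))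

/-- Every functionally bounded subset of a real locally convex space is
totally bounded: for every neighborhood `U` of zero there is a finite set `F` with
`A ⊆ F + U`. -/
theorem funBounded_totallyBounded
    (E : Type*) [AddCommGroup E] [Module ℝ E] [τ : TopologicalSpace E]
    [IsTopologicalAddGroup E] [ContinuousSMul ℝ E] [LocallyConvexSpace ℝ E]
    (A : Set E) (hA : FunBounded τ A) :
    ∀ U ∈ nhds (0 : E), ∃ F : Set E, F.Finite ∧ A ⊆ F + U :=
  funBounded_totallyBounded_general E (τ := τ) A hA
end

section
/- Let X be a Tychonoff (completely regular Hausdorff) topological space and let C_c(X) denote the space of continuous real-valued functions on X with the compact-open topology. Then C_c(X) has the Schur property if and only if X does not contain an infinite compact subset. -/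
open Filter Topology Bornology

/-! If `X` has no infinite compact subset, convergence in `C(X, ℝ)` is pointwise convergence,
which weak convergence implies because evaluations are continuous functionals.

Conversely, an infinite compact `K` has an accumulation point, near which one finds points
`y n ∈ K` with pairwise disjoint open neighbourhoods `U n`, and bumps `g n` supported in `U n`
with `g n (y n) = 1`. Disjointness keeps every finite sum `∑ c n • g n` with `|c n| ≤ 1` inside
the unit ball of the sup norm, a bounded set, so `∑ |φ (g n)|` converges for each continuous
functional `φ` and `g n` is weakly null; yet `g n` does not tend to `0` uniformly on `K`. -/

open Set Function

section WeakTopology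

variable {E : Type*} [AddCommGroup E] [Module ℝ E] [TopologicalSpace E]

lemma tendsto_weakTop_iff {ι : Type*} {l : Filter ι} {u : ι → E} {a : E} :
    Tendsto u l (@nhds E (weakTop E) a) ↔
      ∀ φ : E →L[ℝ] ℝ, Tendsto (fun i => φ (u i)) l (𝓝 (φ a)) := by
  rw [weakTop, nhds_induced, tendsto_comap_iff, tendsto_pi_nhds]
  rfl

/-- Taking `c n` to be the sign of `φ (g n)` bounds the partial sums of `∑ |φ (g n)|`. -/
lemma tendsto_zero_of_isVonNBounded_sums (φ : E →L[ℝ] ℝ) {g : ℕ → E}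
    (hg : IsVonNBounded ℝ {f | ∃ (F : Finset ℕ) (c : ℕ → ℝ), (∀ n, |c n| ≤ 1) ∧
      ∑ n ∈ F, c n • g n = f}) :
    Tendsto (fun n => φ (g n)) atTop (𝓝 0) := by
  obtain ⟨C, hC⟩ := ((NormedSpace.isVonNBounded_iff ℝ).1 (hg.image φ)).exists_norm_le
  have hsign : ∀ n, |(SignType.sign (φ (g n)) : ℝ)| ≤ 1 := fun n => by
    cases SignType.sign (φ (g n)) <;> simp
  have hsum : ∀ N, ∑ n ∈ Finset.range N, |φ (g n)| ≤ C := fun N => by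
    have := hC _ ⟨_, ⟨Finset.range N, _, hsign, rfl⟩, rfl⟩
    simp only [map_sum, map_smul, smul_eq_mul, sign_mul_self] at this
    exact (le_abs_self _).trans this
  exact (tendsto_zero_iff_abs_tendsto_zero _).2
    (summable_of_sum_range_le (fun _ => abs_nonneg _) hsum).tendsto_atTop_zero

end WeakTopology

lemma norm_sum_apply_le_of_pairwise_disjoint_support {ι X M : Type*} [SeminormedAddCommGroup M]
    {f : ι → X → M} (hf : Pairwise (Disjoint on fun i => support (f i)))
    {C : ℝ} (hC₀ : 0 ≤ C) (hC : ∀ i x, ‖f i x‖ ≤ C) (s : Finset ι) (x : X) :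
    ‖∑ i ∈ s, f i x‖ ≤ C := by
  by_cases h : ∃ i ∈ s, f i x ≠ 0
  · obtain ⟨i, hi, hx⟩ := h
    rw [Finset.sum_eq_single_of_mem i hi fun j _ hji =>
      notMem_support.1 fun hxj => disjoint_left.1 (hf hji) hxj hx]
    exact hC i x
  · push Not at h
    rw [Finset.sum_eq_zero h, norm_zero]
    exact hC₀

namespace ContinuousMap

variable {X : Type*} [TopologicalSpace X]

lemma isVonNBounded_of_forall_norm_le {E : Type*} [NormedAddCommGroup E] [NormedSpace ℝ E]
    {S : Set C(X, E)} {C : ℝ} (hS : ∀ f ∈ S, ∀ x, ‖f x‖ ≤ C) : IsVonNBounded ℝ S := by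
  refine isVonNBounded_of_smul_tendsto_zero (ε := fun n : ℕ => 1 / ((n : ℝ) + 1)) (l := atTop)
    (.of_forall fun n => by positivity) fun f hf => ?_
  have hε : Tendsto (fun n : ℕ => 1 / ((n : ℝ) + 1) * C) atTop (𝓝 0) := by
    simpa using tendsto_one_div_add_atTop_nhds_zero_nat.mul_const C
  rw [tendsto_iff_forall_isCompact_tendstoUniformlyOn]
  refine fun K _ => Metric.tendstoUniformlyOn_iff.2 fun δ hδ => ?_
  filter_upwards [hε.eventually (gt_mem_nhds hδ)] with n hn x _
  calc _ = 1 / ((n : ℝ) + 1) * ‖f n x‖ := by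
        simp [dist_eq_norm, norm_smul, abs_of_pos (Nat.cast_add_one_pos (α := ℝ) n)]
    _ ≤ 1 / ((n : ℝ) + 1) * C := by gcongr; exact hS _ (hf n) x
    _ < δ := hn

lemma tendsto_weakTop_zero_of_pairwise_disjoint_support {g : ℕ → C(X, ℝ)}
    (hg : Pairwise (Disjoint on fun n => support (g n))) (hg₁ : ∀ n x, |g n x| ≤ 1) :
    Tendsto g atTop (@nhds _ (weakTop C(X, ℝ)) 0) := by
  refine tendsto_weakTop_iff.2 fun φ => ?_
  rw [map_zero]
  refine tendsto_zero_of_isVonNBounded_sums φ (isVonNBounded_of_forall_norm_le (C := 1) ?_)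
  rintro _ ⟨F, c, hc, rfl⟩ x
  simp only [coe_sum, coe_smul, Finset.sum_apply]
  refine norm_sum_apply_le_of_pairwise_disjoint_support
    (fun m n hmn => (hg hmn).mono (support_const_smul_subset _ _)
      (support_const_smul_subset _ _)) zero_le_one (fun n x => ?_) F x
  simpa [abs_mul] using mul_le_one₀ (hc n) (abs_nonneg _) (hg₁ n x)

lemma tendsto_of_tendsto_apply_of_forall_isCompact_finite {Y ι : Type*} [UniformSpace Y]
    {l : Filter ι} {u : ι → C(X, Y)} {a : C(X, Y)} (hX : ∀ K : Set X, IsCompact K → K.Finite)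
    (hu : ∀ x, Tendsto (fun i => u i x) l (𝓝 (a x))) : Tendsto u l (𝓝 a) :=
  tendsto_iff_forall_isCompact_tendstoUniformlyOn.2 fun K hK _ hV =>
    (hX K hK).eventually_all.2 fun x _ => (hu x).eventually (mem_nhds_left (a x) hV)

end ContinuousMap

lemma exists_seq_pairwise_disjoint_nhds_of_accPt {X : Type*} [TopologicalSpace X] [T2Space X]
    {K : Set X} {x : X} (hx : AccPt x (𝓟 K)) :
    ∃ (y : ℕ → X) (U : ℕ → Set X), (∀ n, y n ∈ K ∧ IsOpen (U n) ∧ y n ∈ U n) ∧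
      Pairwise (Disjoint on U) := by
  have hstep : ∀ W : {W : Set X // IsOpen W ∧ x ∈ W}, ∃ y ∈ K, ∃ (A : Set X)
      (B : {W : Set X // IsOpen W ∧ x ∈ W}), IsOpen A ∧ y ∈ A ∧ Disjoint A B.1 ∧
        A ⊆ W.1 ∧ B.1 ⊆ W.1 := by
    rintro ⟨W, hW, hxW⟩
    obtain ⟨y, ⟨hyW, hyK⟩, hyx⟩ := accPt_iff_nhds.1 hx W (hW.mem_nhds hxW)
    obtain ⟨A, B, hA, hB, hyA, hxB, hAB⟩ := t2_separation hyx
    exact ⟨y, hyK, A ∩ W, ⟨B ∩ W, hB.inter hW, hxB, hxW⟩, hA.inter hW, ⟨hyA, hyW⟩,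
      hAB.mono inter_subset_left inter_subset_left, inter_subset_right, inter_subset_right⟩
  choose y hyK A B hA hyA hAB hAW hBW using hstep
  -- `A (W m)` is disjoint from `W (m + 1)`, which contains every later `A (W n)`.
  let W : ℕ → {W : Set X // IsOpen W ∧ x ∈ W} := fun n => B^[n] ⟨univ, isOpen_univ, mem_univ x⟩
  have hW : Antitone fun n => (W n).1 := antitone_nat_of_succ_le fun n => by
    simpa only [W, iterate_succ_apply'] using hBW (W n)
  refine ⟨fun n => y (W n), fun n => A (W n), fun n => ⟨hyK _, hA _, hyA _⟩,
    pairwise_disjoint_on _ |>.2 fun m n hmn => (hAB (W m)).mono_right ?_⟩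
  calc A (W n) ⊆ (W n).1 := hAW _
    _ ⊆ (W (m + 1)).1 := hW hmn
    _ = (B (W m)).1 := by simp only [W, iterate_succ_apply']

lemma exists_continuousMap_eq_one_support_subset {X : Type*} [TopologicalSpace X]
    [CompletelyRegularSpace X] {U : Set X} (hU : IsOpen U) {y : X} (hy : y ∈ U) :
    ∃ g : C(X, ℝ), g y = 1 ∧ (∀ x, |g x| ≤ 1) ∧ support g ⊆ U := by
  obtain ⟨f, hf, hfy, hfU⟩ := CompletelyRegularSpace.completely_regular_isOpen y U hU hy
  refine ⟨⟨fun x => 1 - f x, by fun_prop⟩, by simp [hfy], fun x => ?_, fun x hx => ?_⟩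
  · change |1 - (f x : ℝ)| ≤ 1
    exact abs_le.2
      ⟨by linarith [unitInterval.le_one (f x)], by linarith [unitInterval.nonneg (f x)]⟩
  · by_contra hxU
    exact hx (by simp [hfU hxU])

/-- For a Tychonoff space `X`, the space `C(X, ℝ)` with the compact-open
topology has the Schur property if and only if `X` has no infinite compact subset. -/
theorem continuousMap_schur_iff_no_infinite_compact
    (X : Type*) [TopologicalSpace X] [T35Space X] :
    HasSchur C(X, ℝ) ↔ ¬ ∃ K : Set X, IsCompact K ∧ K.Infinite := by
  constructor
  · rintro hSchur ⟨K, hK, hKinf⟩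
    obtain ⟨x, -, hx⟩ := hKinf.exists_accPt_of_subset_isCompact hK subset_rfl
    obtain ⟨y, U, hyU, hUdisj⟩ := exists_seq_pairwise_disjoint_nhds_of_accPt hx
    choose g hgy hg₁ hgU using fun n =>
      exists_continuousMap_eq_one_support_subset (hyU n).2.1 (hyU n).2.2
    have hweak := ContinuousMap.tendsto_weakTop_zero_of_pairwise_disjoint_support
      (fun m n hmn => (hUdisj hmn).mono (hgU m) (hgU n)) hg₁
    have huniform := ContinuousMap.tendsto_iff_forall_isCompact_tendstoUniformlyOn.1
      (hSchur g 0 hweak) K hK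
    obtain ⟨n, hn⟩ := (Metric.tendstoUniformlyOn_iff.1 huniform 1 one_pos).exists
    simpa [hgy] using hn (y n) (hyU n).1
  · intro hfin u a hu
    refine ContinuousMap.tendsto_of_tendsto_apply_of_forall_isCompact_finite
      (fun K hK => Set.not_infinite.1 fun h => hfin ⟨K, hK, h⟩) fun x => ?_
    exact tendsto_weakTop_iff.1 hu (ContinuousMap.evalCLM ℝ x)
end
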